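/- Let C ∈ ℍ[t] have positive degree and let R ∈ ℝ[t] be a monic divisor of C·conj(C) such that R is coprime to the maximal real polynomial factor of C. Then there exist a unique monic quaternion polynomial P and a unique quaternion polynomial Q such that C = P·Q and P·conj(P) = R. -/

import Mathlib

/-!
Induction on `deg R`. A monic irreducible factor `M` of `R` has degree at most two and, by
coprimality, does not divide `C`. Being real, `M` is central, so `M ∣ C · conj C` gives
`M ∣ E · conj E` for the remainder `E = C mod M`; then `deg M ≤ 2 deg E` and `deg E < deg M ≤ 2`
force `E` linear and `M` quadratic. The monic multiple `h` of `E` satisfies `h · conj h = M` and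
left-divides `C = h · lc E + h · conj h · (C div M)`. Conversely, any monic `h'` with
`h' · conj h' = M` and `h' ∣ C` left-divides `E = C - h' · conj h' · (C div M)`, so `h' = h`.
Peeling off `h` replaces `C` by `h⁻¹ C` and `R` by `R / M`.
-/

open Polynomial
open scoped Quaternion

/-- Coefficientwise conjugation of a quaternion polynomial. -/
noncomputable def qconj (P : ℍ[ℝ][X]) : ℍ[ℝ][X] :=
  ∑ i ∈ P.support, Polynomial.C (star (P.coeff i)) * Polynomial.X ^ i

namespace Polynomial

theorem commute_of_forall_coeff_commute {R : Type*} [Semiring R] {p : R[X]}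
    (hp : ∀ n b, Commute (p.coeff n) b) (q : R[X]) : Commute p q := by
  refine Polynomial.ext fun n => ?_
  rw [coeff_mul, coeff_mul]
  conv_rhs => rw [← Finset.HasAntidiagonal.map_swap_antidiagonal, Finset.sum_map]
  exact Finset.sum_congr rfl fun x _ => hp x.1 (q.coeff x.2)

theorem eq_mul_C_leadingCoeff_inv_of_monic_of_dvd {K : Type*} [DivisionRing K] {p q : K[X]}
    (hp : p.Monic) (hq : q ≠ 0) (hdvd : p ∣ q) (hdeg : q.natDegree ≤ p.natDegree) :
    p = q * C q.leadingCoeff⁻¹ := by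
  have hq' := eq_mul_leadingCoeff_of_monic_of_dvd_of_natDegree_le hp hdvd hdeg
  calc p = p * C (q.leadingCoeff * q.leadingCoeff⁻¹) := by
        rw [mul_inv_cancel₀ (leadingCoeff_ne_zero.mpr hq), C_1, mul_one]
    _ = q * C q.leadingCoeff⁻¹ := by rw [C_mul, ← mul_assoc, ← hq']

end Polynomial

@[simp]
theorem coeff_qconj (P : ℍ[ℝ][X]) (n : ℕ) : (qconj P).coeff n = star (P.coeff n) := by
  classical
  simp only [qconj, finsetSum_coeff, coeff_C_mul_X_pow, Finset.sum_ite_eq, mem_support_iff]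
  split_ifs <;> simp_all

@[simp]
theorem qconj_qconj (P : ℍ[ℝ][X]) : qconj (qconj P) = P := ext fun n => by simp

@[simp]
theorem qconj_zero : qconj 0 = 0 := Polynomial.ext fun n => by simp

@[simp]
theorem qconj_eq_zero {P : ℍ[ℝ][X]} : qconj P = 0 ↔ P = 0 :=
  ⟨fun h => by rw [← qconj_qconj P, h, qconj_zero], fun h => h ▸ qconj_zero⟩

theorem qconj_sub (P Q : ℍ[ℝ][X]) : qconj (P - Q) = qconj P - qconj Q := ext fun n => by simp

theorem qconj_C (a : ℍ[ℝ]) : qconj (C a) = C (star a) := ext fun n => by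
  simp only [coeff_qconj, coeff_C]
  split_ifs <;> simp

theorem qconj_mul (P Q : ℍ[ℝ][X]) : qconj (P * Q) = qconj Q * qconj P := by
  refine Polynomial.ext fun n => ?_
  rw [coeff_qconj, coeff_mul, coeff_mul, star_sum,
    ← Finset.HasAntidiagonal.map_swap_antidiagonal, Finset.sum_map]
  simp

theorem qconj_map_algebraMap (r : ℝ[X]) :
    qconj (r.map (algebraMap ℝ ℍ[ℝ])) = r.map (algebraMap ℝ ℍ[ℝ]) := ext fun n => by
  simp [Quaternion.algebraMap_def]

@[simp]
theorem natDegree_qconj (P : ℍ[ℝ][X]) : (qconj P).natDegree = P.natDegree := by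
  have hsupp : (qconj P).support = P.support := by ext; simp
  simp only [natDegree, degree, hsupp]

theorem Polynomial.Monic.qconj {P : ℍ[ℝ][X]} (hP : P.Monic) : (_root_.qconj P).Monic := by
  rw [Monic.def, Polynomial.leadingCoeff, natDegree_qconj, coeff_qconj, ← Polynomial.leadingCoeff,
    hP.leadingCoeff, star_one]

theorem commute_of_qconj_eq_self {P : ℍ[ℝ][X]} (hP : qconj P = P) (Q : ℍ[ℝ][X]) :
    Commute P Q := by
  refine commute_of_forall_coeff_commute (fun n b => ?_) Q
  have hstar : star (P.coeff n) = P.coeff n := by rw [← coeff_qconj, hP]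
  rw [Quaternion.star_eq_self.mp hstar]
  exact Quaternion.coe_commute _ _

theorem commute_map_algebraMap (r : ℝ[X]) (Q : ℍ[ℝ][X]) :
    Commute (r.map (algebraMap ℝ ℍ[ℝ])) Q :=
  commute_of_qconj_eq_self (qconj_map_algebraMap r) Q

theorem commute_mul_qconj_self (P Q : ℍ[ℝ][X]) : Commute (P * qconj P) Q :=
  commute_of_qconj_eq_self (by rw [qconj_mul, qconj_qconj]) Q

theorem mul_mul_qconj_mul (P Q : ℍ[ℝ][X]) :
    P * Q * qconj (P * Q) = P * qconj P * (Q * qconj Q) := by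
  rw [qconj_mul, mul_assoc, ← mul_assoc Q, (commute_mul_qconj_self Q _).eq, mul_assoc]

theorem natDegree_mul_qconj_self (P : ℍ[ℝ][X]) :
    (P * qconj P).natDegree = 2 * P.natDegree := by
  rcases eq_or_ne P 0 with rfl | hP
  · simp
  · rw [natDegree_mul hP (qconj_eq_zero.not.mpr hP), natDegree_qconj, two_mul]

theorem eq_one_of_monic_of_mul_qconj_eq_one {P : ℍ[ℝ][X]} (hP : P.Monic)
    (hnorm : P * qconj P = 1) : P = 1 := by
  have := natDegree_mul_qconj_self P
  rw [hnorm, natDegree_one] at this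
  exact hP.natDegree_eq_zero.mp (by omega)

/-- When `M` is an irreducible factor of `A · conj A` not dividing `A`, this is the unique monic
left factor `h` of `A` with `h · conj h = M`. -/
noncomputable def monicRemainder (A : ℍ[ℝ][X]) (M : ℝ[X]) : ℍ[ℝ][X] :=
  A %ₘ M.map (algebraMap ℝ ℍ[ℝ]) * C (A %ₘ M.map (algebraMap ℝ ℍ[ℝ])).leadingCoeff⁻¹

section Remainder

variable {A : ℍ[ℝ][X]} {M : ℝ[X]}

theorem dvd_mul_qconj_modByMonic (hdvd : M.map (algebraMap ℝ ℍ[ℝ]) ∣ A * qconj A) :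
    M.map (algebraMap ℝ ℍ[ℝ]) ∣
      A %ₘ M.map (algebraMap ℝ ℍ[ℝ]) * qconj (A %ₘ M.map (algebraMap ℝ ℍ[ℝ])) := by
  have hcomm := commute_map_algebraMap M
  set Mq := M.map (algebraMap ℝ ℍ[ℝ])
  set D := A /ₘ Mq
  have hE : A %ₘ Mq = A - Mq * D := eq_sub_of_add_eq (modByMonic_add_div A Mq)
  have hexpand : (A - Mq * D) * qconj (A - Mq * D)
      = A * qconj A - Mq * (A * qconj D + D * qconj A - D * qconj D * Mq) := by
    rw [qconj_sub, qconj_mul, qconj_map_algebraMap]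
    calc _ = A * qconj A - A * qconj D * Mq - Mq * (D * qconj A - D * qconj D * Mq) := by
          noncomm_ring
      _ = _ := by rw [← (hcomm _).eq]; noncomm_ring
  rw [hE, hexpand]
  exact dvd_sub hdvd (dvd_mul_right _ _)

theorem dvd_modByMonic_of_mul_qconj_eq {h : ℍ[ℝ][X]}
    (hnorm : h * qconj h = M.map (algebraMap ℝ ℍ[ℝ])) (hA : h ∣ A) :
    h ∣ A %ₘ M.map (algebraMap ℝ ℍ[ℝ]) := by
  obtain ⟨D, rfl⟩ := hA
  refine ⟨D - qconj h * (h * D /ₘ M.map (algebraMap ℝ ℍ[ℝ])), ?_⟩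
  rw [eq_sub_of_add_eq (modByMonic_add_div _ _), mul_sub, ← mul_assoc, hnorm]

variable (hM : M.Monic) (hA : ¬ M.map (algebraMap ℝ ℍ[ℝ]) ∣ A)
include hM hA

theorem modByMonic_map_ne_zero : A %ₘ M.map (algebraMap ℝ ℍ[ℝ]) ≠ 0 :=
  (modByMonic_eq_zero_iff_dvd (hM.map _)).not.mpr hA

theorem natDegree_modByMonic_map_lt :
    (A %ₘ M.map (algebraMap ℝ ℍ[ℝ])).natDegree < M.natDegree := by
  rw [← hM.natDegree_map (algebraMap ℝ ℍ[ℝ])]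
  exact natDegree_modByMonic_lt A (hM.map _) (by rintro h; exact hA (h ▸ one_dvd A))

theorem monicRemainder_monic : (monicRemainder A M).Monic :=
  monic_mul_leadingCoeff_inv (modByMonic_map_ne_zero hM hA)

variable (hM2 : M.natDegree ≤ 2)
include hM2

theorem eq_monicRemainder {h : ℍ[ℝ][X]} (hh : h.Monic)
    (hnorm : h * qconj h = M.map (algebraMap ℝ ℍ[ℝ])) (hdvd : h ∣ A) :
    h = monicRemainder A M := by
  have hlt := natDegree_modByMonic_map_lt hM hA
  have hdeg := natDegree_mul_qconj_self h
  rw [hnorm, hM.natDegree_map] at hdeg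
  exact eq_mul_C_leadingCoeff_inv_of_monic_of_dvd hh (modByMonic_map_ne_zero hM hA)
    (dvd_modByMonic_of_mul_qconj_eq hnorm hdvd) (by omega)

variable (hdvd : M.map (algebraMap ℝ ℍ[ℝ]) ∣ A * qconj A)
include hdvd

theorem two_mul_natDegree_modByMonic_map :
    2 * (A %ₘ M.map (algebraMap ℝ ℍ[ℝ])).natDegree = M.natDegree := by
  have hlt := natDegree_modByMonic_map_lt hM hA
  have hE := modByMonic_map_ne_zero hM hA
  have hle := natDegree_le_of_dvd (dvd_mul_qconj_modByMonic hdvd)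
    (mul_ne_zero hE (qconj_eq_zero.not.mpr hE))
  rw [natDegree_mul_qconj_self, hM.natDegree_map] at hle
  omega

theorem monicRemainder_mul_qconj :
    monicRemainder A M * qconj (monicRemainder A M) = M.map (algebraMap ℝ ℍ[ℝ]) := by
  have hh := monicRemainder_monic hM hA
  have hnorm : monicRemainder A M * qconj (monicRemainder A M)
      = A %ₘ M.map (algebraMap ℝ ℍ[ℝ]) * qconj (A %ₘ M.map (algebraMap ℝ ℍ[ℝ])) *
        C ((A %ₘ M.map (algebraMap ℝ ℍ[ℝ])).leadingCoeff⁻¹ *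
          star (A %ₘ M.map (algebraMap ℝ ℍ[ℝ])).leadingCoeff⁻¹) := by
    rw [monicRemainder, mul_mul_qconj_mul, qconj_C, ← C_mul]
  refine eq_of_monic_of_dvd_of_natDegree_le (hM.map _) (hh.mul hh.qconj) ?_ ?_
  · rw [hnorm]
    exact dvd_mul_of_dvd_left (dvd_mul_qconj_modByMonic hdvd) _
  · rw [natDegree_mul_qconj_self, monicRemainder, natDegree_mul_leadingCoeff_self_inv,
      two_mul_natDegree_modByMonic_map hM hA hM2 hdvd, hM.natDegree_map]

theorem monicRemainder_dvd : monicRemainder A M ∣ A := by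
  have hE : monicRemainder A M * C (A %ₘ M.map (algebraMap ℝ ℍ[ℝ])).leadingCoeff
      = A %ₘ M.map (algebraMap ℝ ℍ[ℝ]) := by
    rw [monicRemainder, mul_assoc, ← C_mul,
      inv_mul_cancel₀ (leadingCoeff_ne_zero.mpr (modByMonic_map_ne_zero hM hA)), C_1, mul_one]
  refine ⟨C (A %ₘ M.map (algebraMap ℝ ℍ[ℝ])).leadingCoeff +
    qconj (monicRemainder A M) * (A /ₘ M.map (algebraMap ℝ ℍ[ℝ])), ?_⟩
  rw [mul_add, hE, ← mul_assoc, monicRemainder_mul_qconj hM hA hM2 hdvd, modByMonic_add_div]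

end Remainder

structure IsNormFactorization (A : ℍ[ℝ][X]) (R : ℝ[X]) (P Q : ℍ[ℝ][X]) : Prop where
  monic : P.Monic
  eq_mul : A = P * Q
  mul_qconj : P * qconj P = R.map (algebraMap ℝ ℍ[ℝ])

section Factorization

variable {A A₁ h P Q : ℍ[ℝ][X]} {M R : ℝ[X]}

theorem dvd_mul_qconj_of_eq_mul_left (hM : M.Monic)
    (hnorm : h * qconj h = M.map (algebraMap ℝ ℍ[ℝ])) (hA : A = h * A₁)
    (hdvd : (M * R).map (algebraMap ℝ ℍ[ℝ]) ∣ A * qconj A) :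
    R.map (algebraMap ℝ ℍ[ℝ]) ∣ A₁ * qconj A₁ := by
  rw [hA, mul_mul_qconj_mul, hnorm, Polynomial.map_mul] at hdvd
  exact (mul_dvd_mul_iff_left (hM.map _).ne_zero).mp hdvd

theorem map_algebraMap_dvd_of_eq_mul_left (hA : A = h * A₁)
    (hr : R.map (algebraMap ℝ ℍ[ℝ]) ∣ A₁) : R.map (algebraMap ℝ ℍ[ℝ]) ∣ A := by
  obtain ⟨t, rfl⟩ := hr
  exact ⟨h * t, by rw [hA, ← mul_assoc, ← (commute_map_algebraMap R h).eq, mul_assoc]⟩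

theorem IsNormFactorization.mul_left (hh : h.Monic)
    (hnorm : h * qconj h = M.map (algebraMap ℝ ℍ[ℝ])) (hA : A = h * A₁)
    (hP : IsNormFactorization A₁ R P Q) : IsNormFactorization A (M * R) (h * P) Q where
  monic := hh.mul hP.monic
  eq_mul := by rw [hA, hP.eq_mul, mul_assoc]
  mul_qconj := by rw [mul_mul_qconj_mul, hnorm, hP.mul_qconj, Polynomial.map_mul]

theorem IsNormFactorization.exists_eq_monicRemainder_mul (hM : M.Monic)
    (hM2 : M.natDegree ≤ 2) (hA : ¬ M.map (algebraMap ℝ ℍ[ℝ]) ∣ A)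
    (hA₁ : A = monicRemainder A M * A₁) (hP : IsNormFactorization A (M * R) P Q) :
    ∃ P₁, P = monicRemainder A M * P₁ ∧ IsNormFactorization A₁ R P₁ Q := by
  have hPA : P ∣ A := ⟨Q, hP.eq_mul⟩
  have hMP : ¬ M.map (algebraMap ℝ ℍ[ℝ]) ∣ P := fun hMP => hA (hMP.trans hPA)
  have hdvdP : M.map (algebraMap ℝ ℍ[ℝ]) ∣ P * qconj P := by
    rw [hP.mul_qconj, Polynomial.map_mul]
    exact dvd_mul_right _ _
  have hnorm := monicRemainder_mul_qconj hM hMP hM2 hdvdP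
  have heq : monicRemainder P M = monicRemainder A M :=
    eq_monicRemainder hM hA hM2 (monicRemainder_monic hM hMP) hnorm
      ((monicRemainder_dvd hM hMP hM2 hdvdP).trans hPA)
  rw [heq] at hnorm
  obtain ⟨P₁, hP₁⟩ := heq ▸ monicRemainder_dvd hM hMP hM2 hdvdP
  have hh := monicRemainder_monic hM hA
  refine ⟨P₁, hP₁, hh.of_mul_monic_left (hP₁ ▸ hP.monic), ?_, ?_⟩
  · refine mul_left_cancel₀ hh.ne_zero ?_
    rw [← mul_assoc, ← hP₁, ← hP.eq_mul, ← hA₁]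
  · refine mul_left_cancel₀ (hM.map (algebraMap ℝ ℍ[ℝ])).ne_zero ?_
    conv_lhs => rw [← hnorm, ← mul_mul_qconj_mul, ← hP₁, hP.mul_qconj]
    rw [Polynomial.map_mul]

end Factorization

theorem exists_unique_isNormFactorization (A : ℍ[ℝ][X]) (R : ℝ[X]) (hR : R.Monic)
    (hdvd : R.map (algebraMap ℝ ℍ[ℝ]) ∣ A * qconj A)
    (hcop : ∀ r : ℝ[X], r.map (algebraMap ℝ ℍ[ℝ]) ∣ A → r ∣ R → r.degree ≤ 0) :
    ∃ P Q, IsNormFactorization A R P Q ∧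
      ∀ P' Q', IsNormFactorization A R P' Q' → P' = P ∧ Q' = Q := by
  induction hn : R.natDegree using Nat.strong_induction_on generalizing A R with
  | _ n ih =>
  by_cases hR1 : R = 1
  · subst hR1
    refine ⟨1, A, ⟨monic_one, (one_mul A).symm, ?_⟩, fun P' Q' hP' => ?_⟩
    · rw [← C_1, qconj_C, star_one, C_1, mul_one, Polynomial.map_one]
    have hP'1 := eq_one_of_monic_of_mul_qconj_eq_one hP'.monic
      (by rw [hP'.mul_qconj, Polynomial.map_one])
    exact ⟨hP'1, by rw [hP'.eq_mul, hP'1, one_mul]⟩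
  obtain ⟨M, hM, hMirr, R₁, rfl⟩ := exists_monic_irreducible_factor R (hR.isUnit_iff.not.mpr hR1)
  have hM2 := hMirr.natDegree_le_two
  have hMA : ¬ M.map (algebraMap ℝ ℍ[ℝ]) ∣ A := fun hMA =>
    (degree_pos_of_irreducible hMirr).not_ge (hcop M hMA (dvd_mul_right M R₁))
  have hMdvd : M.map (algebraMap ℝ ℍ[ℝ]) ∣ A * qconj A :=
    (Polynomial.map_dvd _ (dvd_mul_right M R₁)).trans hdvd
  obtain ⟨A₁, hA₁⟩ := monicRemainder_dvd hM hMA hM2 hMdvd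
  have hnorm := monicRemainder_mul_qconj hM hMA hM2 hMdvd
  have hR₁ : R₁.Monic := hM.of_mul_monic_left hR
  have hdeg : R₁.natDegree < n := by
    rw [← hn, hM.natDegree_mul hR₁]
    have := hMirr.natDegree_pos
    omega
  obtain ⟨P₁, Q₁, hP₁, huniq⟩ := ih R₁.natDegree hdeg A₁ R₁ hR₁
    (dvd_mul_qconj_of_eq_mul_left hM hnorm hA₁ hdvd)
    (fun r hr hrR =>
      hcop r (map_algebraMap_dvd_of_eq_mul_left hA₁ hr) (hrR.trans (dvd_mul_left R₁ M)))
    rfl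
  refine ⟨_, Q₁, hP₁.mul_left (monicRemainder_monic hM hMA) hnorm hA₁, fun P' Q' hP' => ?_⟩
  obtain ⟨P₁', rfl, hP₁'⟩ := hP'.exists_eq_monicRemainder_mul hM hM2 hMA hA₁
  obtain ⟨rfl, rfl⟩ := huniq P₁' Q' hP₁'
  exact ⟨rfl, rfl⟩

theorem exists_unique_left_factor_with_norm_general (C : ℍ[ℝ][X]) (R : ℝ[X])
    (hR : R.Monic)
    (hdvd : R.map (algebraMap ℝ ℍ[ℝ]) ∣ C * qconj C)
    (hcop : ∀ r : ℝ[X], r.map (algebraMap ℝ ℍ[ℝ]) ∣ C → r ∣ R → r.degree ≤ 0) :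
    ∃ P Q : ℍ[ℝ][X], P.Monic ∧ C = P * Q ∧ P * qconj P = R.map (algebraMap ℝ ℍ[ℝ]) ∧
      ∀ P' Q' : ℍ[ℝ][X], P'.Monic → C = P' * Q' →
        P' * qconj P' = R.map (algebraMap ℝ ℍ[ℝ]) → P' = P ∧ Q' = Q := by
  obtain ⟨P, Q, ⟨hP, hPQ, hnorm⟩, huniq⟩ := exists_unique_isNormFactorization C R hR hdvd hcop
  exact ⟨P, Q, hP, hPQ, hnorm, fun P' Q' hP' hPQ' hnorm' => huniq P' Q' ⟨hP', hPQ', hnorm'⟩⟩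

/-- Lemma 3 of the paper: for `C ∈ ℍ[t]` of positive degree and a monic real
divisor `R` of `C ⬝ conj C` coprime to the maximal real polynomial factor of `C`,
there are unique `P` (monic) and `Q` with `C = P Q` and `P conj P = R`. -/
theorem exists_unique_left_factor_with_norm (C : ℍ[ℝ][X]) (R : ℝ[X])
    (hC : 0 < C.degree) (hR : R.Monic)
    (hdvd : R.map (algebraMap ℝ ℍ[ℝ]) ∣ C * qconj C)
    (hcop : ∀ r : ℝ[X], r.map (algebraMap ℝ ℍ[ℝ]) ∣ C → r ∣ R → r.degree ≤ 0) :
    ∃ P Q : ℍ[ℝ][X], P.Monic ∧ C = P * Q ∧ P * qconj P = R.map (algebraMap ℝ ℍ[ℝ]) ∧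
      ∀ P' Q' : ℍ[ℝ][X], P'.Monic → C = P' * Q' →
        P' * qconj P' = R.map (algebraMap ℝ ℍ[ℝ]) → P' = P ∧ Q' = Q :=
  exists_unique_left_factor_with_norm_general C R hR hdvd hcop
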